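/- arXiv:1810.05266 — 4 statements merged into one kernel-verified Lean document; each statement's English description precedes it below -/
import Mathlib

section
/- If P is a solvable pebble distribution on a graph G, then the weighted sum over all vertices v of eff(v)·P(v), where eff(v) = Σ_{i=0}^{diam(G)} (1/2)^i |N_i(v)|, is at least |V(G)| + TE(P), where TE(P) is the total excess of P. -/
open Finset

/-- A pebbling move: remove two pebbles from `src`, add one to `tgt`. -/
structure PMove (V : Type*) where
  src : V
  tgt : V

/-- Result of applying one pebbling move to a distribution. -/
def applyMove {V : Type*} [DecidableEq V] (p : V → ℕ) (m : PMove V) : V → ℕ :=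
  fun w => if w = m.src then p w - 2 else if w = m.tgt then p w + 1 else p w

/-- A list of moves is executable: each move goes along an edge and has
two pebbles available at its source. -/
def Executable {V : Type*} [DecidableEq V] (G : SimpleGraph V) :
    (V → ℕ) → List (PMove V) → Prop
  | _, [] => True
  | p, m :: ms => G.Adj m.src m.tgt ∧ 2 ≤ p m.src ∧ Executable G (applyMove p m) ms

/-- The distribution obtained after applying a sequence of moves. -/
def applySeq {V : Type*} [DecidableEq V] (p : V → ℕ) (σ : List (PMove V)) : V → ℕ :=
  σ.foldl applyMove p

/-- `v` is `k`-reachable under `p`. -/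
def KReachable {V : Type*} [DecidableEq V] (G : SimpleGraph V) (p : V → ℕ) (k : ℕ) (v : V) :
    Prop :=
  ∃ σ : List (PMove V), Executable G p σ ∧ k ≤ applySeq p σ v

/-- `v` is reachable under `p`: some pebbling sequence puts a pebble on `v`. -/
def Reachable' {V : Type*} [DecidableEq V] (G : SimpleGraph V) (p : V → ℕ) (v : V) : Prop :=
  KReachable G p 1 v

/-- The maximal number of pebbles that can be moved to `v`. -/
noncomputable def reach {V : Type*} [DecidableEq V] (G : SimpleGraph V) (p : V → ℕ) (v : V) :
    ℕ :=
  sSup {k | KReachable G p k v}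

/-- The excess of `v` under `p`. -/
noncomputable def exc {V : Type*} [DecidableEq V] (G : SimpleGraph V) (p : V → ℕ) (v : V) :
    ℕ :=
  reach G p v - 1

/-- The total excess of `p`. -/
noncomputable def TE {V : Type*} [Fintype V] [DecidableEq V] (G : SimpleGraph V)
    (p : V → ℕ) : ℕ :=
  ∑ v, exc G p v

/-- `p` is solvable: every vertex is reachable. -/
def Solvable {V : Type*} [DecidableEq V] (G : SimpleGraph V) (p : V → ℕ) : Prop :=
  ∀ v, Reachable' G p v

/-- The number of vertices reachable under `p`. -/
noncomputable def cov {V : Type*} [DecidableEq V] (G : SimpleGraph V) (p : V → ℕ) : ℕ :=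
  Set.ncard {v | Reachable' G p v}

/-- The number of cooperation vertices of the pair `(p, q)`. -/
noncomputable def coop {V : Type*} [DecidableEq V] (G : SimpleGraph V) (p q : V → ℕ) : ℕ :=
  Set.ncard {v | Reachable' G (p + q) v ∧ ¬ Reachable' G p v ∧ ¬ Reachable' G q v}

/-- The number of double covered vertices of the pair `(p, q)`. -/
noncomputable def DC {V : Type*} [DecidableEq V] (G : SimpleGraph V) (p q : V → ℕ) : ℕ :=
  Set.ncard {v | Reachable' G p v ∧ Reachable' G q v}

/-- The cooperation excess between `p` and `q`. -/
noncomputable def CE {V : Type*} [Fintype V] [DecidableEq V] (G : SimpleGraph V)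
    (p q : V → ℕ) : ℤ :=
  (TE G (p + q) : ℤ) - TE G p - TE G q

/-- The effect of a pebble placed at `v`. -/
noncomputable def eff {V : Type*} (G : SimpleGraph V) (v : V) : ℚ :=
  ∑ i ∈ Finset.range (G.diam + 1), (1 / 2 : ℚ) ^ i * (Set.ncard {u | G.dist v u = i})

/-- The optimal pebbling number of `G`. -/
noncomputable def piOpt {V : Type*} [Fintype V] [DecidableEq V] (G : SimpleGraph V) : ℕ :=
  sInf {k | ∃ p : V → ℕ, Solvable G p ∧ ∑ v, p v = k}

section Aux

open SimpleGraph

variable {V : Type*} [Fintype V] [DecidableEq V] (G : SimpleGraph V)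

/-- The weight of a distribution seen from `u`. -/
noncomputable def wt (u : V) (p : V → ℕ) : ℚ :=
  ∑ v, (1 / 2 : ℚ) ^ (G.dist u v) * p v

lemma self_le_wt (u : V) (p : V → ℕ) : (p u : ℚ) ≤ wt G u p := by
  have h : (p u : ℚ) = (1 / 2 : ℚ) ^ (G.dist u u) * p u := by
    simp [SimpleGraph.dist_self]
  rw [h]
  exact Finset.single_le_sum (f := fun v => (1 / 2 : ℚ) ^ (G.dist u v) * p v)
    (fun v _ => by positivity) (Finset.mem_univ u)

lemma wt_applyMove_le (hconn : G.Connected) (u : V) (p : V → ℕ) (m : PMove V)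
    (hadj : G.Adj m.src m.tgt) (h2 : 2 ≤ p m.src) :
    wt G u (applyMove p m) ≤ wt G u p := by
  have hne : m.src ≠ m.tgt := hadj.ne
  have hval : ∀ v, ((applyMove p m v : ℕ) : ℚ) =
      (p v : ℚ) + ((if v = m.src then (-2 : ℚ) else 0) + (if v = m.tgt then (1 : ℚ) else 0)) := by
    intro v
    unfold applyMove
    by_cases hs : v = m.src
    · subst hs
      rw [if_pos rfl, if_pos rfl, if_neg hne]
      push_cast [h2]
      ring
    · rw [if_neg hs, if_neg hs]
      by_cases ht : v = m.tgt
      · subst ht; rw [if_pos rfl, if_pos rfl]; push_cast; ring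
      · rw [if_neg ht, if_neg ht]; push_cast; ring
  have hsum : wt G u (applyMove p m) =
      wt G u p + ((1 / 2 : ℚ) ^ (G.dist u m.src) * (-2)
        + (1 / 2 : ℚ) ^ (G.dist u m.tgt) * 1) := by
    unfold wt
    have : ∀ v ∈ Finset.univ, (1 / 2 : ℚ) ^ (G.dist u v) * (applyMove p m v : ℕ) =
        (1 / 2 : ℚ) ^ (G.dist u v) * p v
        + ((if v = m.src then (1 / 2 : ℚ) ^ (G.dist u m.src) * (-2) else 0)
          + (if v = m.tgt then (1 / 2 : ℚ) ^ (G.dist u m.tgt) * 1 else 0)) := by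
      intro v _
      rw [hval v]
      by_cases hs : v = m.src
      · subst hs; rw [if_pos rfl, if_neg hne, if_pos rfl, if_neg hne]; ring
      · rw [if_neg hs, if_neg hs]
        by_cases ht : v = m.tgt
        · subst ht; rw [if_pos rfl, if_pos rfl]; ring
        · rw [if_neg ht, if_neg ht]; ring
    rw [Finset.sum_congr rfl this, Finset.sum_add_distrib, Finset.sum_add_distrib,
      Finset.sum_ite_eq' Finset.univ m.src, Finset.sum_ite_eq' Finset.univ m.tgt]
    simp
  rw [hsum]
  have hdist : G.dist u m.src ≤ G.dist u m.tgt + 1 := by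
    have h1 : G.dist m.tgt m.src = 1 := SimpleGraph.dist_eq_one_iff_adj.mpr hadj.symm
    calc G.dist u m.src ≤ G.dist u m.tgt + G.dist m.tgt m.src := hconn.dist_triangle
    _ = G.dist u m.tgt + 1 := by rw [h1]
  have hpow : (1 / 2 : ℚ) ^ (G.dist u m.tgt) ≤ 2 * (1 / 2 : ℚ) ^ (G.dist u m.src) := by
    have : (1 / 2 : ℚ) ^ (G.dist u m.src) ≥ (1 / 2 : ℚ) ^ (G.dist u m.tgt + 1) :=
      pow_le_pow_of_le_one (by norm_num) (by norm_num) hdist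
    rw [pow_succ] at this
    linarith
  linarith

lemma wt_applySeq_le (hconn : G.Connected) (u : V) :
    ∀ (σ : List (PMove V)) (p : V → ℕ), Executable G p σ →
      wt G u (applySeq p σ) ≤ wt G u p := by
  intro σ
  induction σ with
  | nil => intro p _; simp [applySeq]
  | cons m ms ih =>
    intro p hex
    obtain ⟨hadj, h2, hex'⟩ := hex
    calc wt G u (applySeq p (m :: ms)) = wt G u (applySeq (applyMove p m) ms) := rfl
      _ ≤ wt G u (applyMove p m) := ih _ hex'
      _ ≤ wt G u p := wt_applyMove_le G hconn u p m hadj h2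

lemma kreachable_le_wt (hconn : G.Connected) {p : V → ℕ} {k : ℕ} {u : V}
    (h : KReachable G p k u) : (k : ℚ) ≤ wt G u p := by
  obtain ⟨σ, hex, hk⟩ := h
  calc (k : ℚ) ≤ (applySeq p σ u : ℕ) := by exact_mod_cast hk
    _ ≤ wt G u (applySeq p σ) := self_le_wt G u _
    _ ≤ wt G u p := wt_applySeq_le G hconn u σ p hex

lemma bddAbove_kreach (hconn : G.Connected) (p : V → ℕ) (u : V) :
    BddAbove {k | KReachable G p k u} := by
  refine ⟨Nat.ceil (wt G u p), fun k hk => ?_⟩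
  have h1 : (k : ℚ) ≤ wt G u p := kreachable_le_wt G hconn hk
  have h2 : (k : ℚ) ≤ (Nat.ceil (wt G u p) : ℚ) := h1.trans (Nat.le_ceil _)
  exact_mod_cast h2

lemma zero_kreachable (p : V → ℕ) (u : V) : KReachable G p 0 u :=
  ⟨[], trivial, Nat.zero_le _⟩

lemma reach_le_wt (hconn : G.Connected) (p : V → ℕ) (u : V) :
    (reach G p u : ℚ) ≤ wt G u p := by
  have hmem : reach G p u ∈ {k | KReachable G p k u} :=
    Nat.sSup_mem ⟨0, zero_kreachable G p u⟩ (bddAbove_kreach G hconn p u)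
  exact kreachable_le_wt G hconn hmem

lemma one_le_reach (hconn : G.Connected) {p : V → ℕ} {u : V} (h : Reachable' G p u) :
    1 ≤ reach G p u :=
  le_csSup (bddAbove_kreach G hconn p u) h

lemma dist_le_diam' (hconn : G.Connected) (u v : V) : G.dist u v ≤ G.diam := by
  have : Nonempty V := hconn.nonempty
  apply SimpleGraph.dist_le_diam
  obtain ⟨a, b, hab⟩ := SimpleGraph.exists_edist_eq_ediam_of_finite (G := G)
  rw [← hab]
  exact SimpleGraph.edist_ne_top_iff_reachable.mpr (hconn a b)

lemma eff_eq_sum (hconn : G.Connected) (v : V) :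
    eff G v = ∑ u, (1 / 2 : ℚ) ^ (G.dist v u) := by
  classical
  have hmaps : ∀ u ∈ Finset.univ, G.dist v u ∈ Finset.range (G.diam + 1) := by
    intro u _
    exact Finset.mem_range.mpr (Nat.lt_succ_of_le (dist_le_diam' G hconn v u))
  rw [← Finset.sum_fiberwise_of_maps_to hmaps (fun u => (1 / 2 : ℚ) ^ (G.dist v u))]
  unfold eff
  refine Finset.sum_congr rfl fun i _ => ?_
  have hset : {u | G.dist v u = i} =
      ↑(Finset.univ.filter (fun u => G.dist v u = i)) := by
    ext u; simp
  rw [hset, Set.ncard_coe_finset]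
  rw [Finset.sum_congr rfl (fun u hu => by
    rw [(Finset.mem_filter.mp hu).2])]
  rw [Finset.sum_const, nsmul_eq_mul, mul_comm]

end Aux

/-- If `P` is a solvable pebble distribution on a connected graph `G`, then
`∑ v, eff(v) * P(v) ≥ |V(G)| + TE(P)`. -/
theorem stmt0 {V : Type*} [Fintype V] [DecidableEq V] (G : SimpleGraph V)
    (hconn : G.Connected) (P : V → ℕ) (hP : Solvable G P) :
    (Fintype.card V : ℚ) + (TE G P : ℚ) ≤ ∑ v, eff G v * (P v : ℚ) := by
  have key : ∀ u : V, (1 : ℚ) + (exc G P u : ℚ) ≤ wt G u P := by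
    intro u
    have h1 : 1 ≤ reach G P u := one_le_reach G hconn (hP u)
    have h2 : (1 : ℚ) + (exc G P u : ℚ) = (reach G P u : ℚ) := by
      unfold exc
      have : 1 + (reach G P u - 1) = reach G P u := by omega
      exact_mod_cast congrArg (Nat.cast (R := ℚ)) this
    rw [h2]
    exact reach_le_wt G hconn P u
  calc (Fintype.card V : ℚ) + (TE G P : ℚ)
      = ∑ u : V, ((1 : ℚ) + (exc G P u : ℚ)) := by
        rw [Finset.sum_add_distrib]
        simp [TE, Finset.card_univ]
    _ ≤ ∑ u : V, wt G u P := Finset.sum_le_sum fun u _ => key u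
    _ = ∑ u : V, ∑ v : V, (1 / 2 : ℚ) ^ (G.dist u v) * P v := rfl
    _ = ∑ v : V, ∑ u : V, (1 / 2 : ℚ) ^ (G.dist u v) * P v := Finset.sum_comm
    _ = ∑ v : V, eff G v * (P v : ℚ) := by
        refine Finset.sum_congr rfl fun v _ => ?_
        rw [eff_eq_sum G hconn v, Finset.sum_mul]
        refine Finset.sum_congr rfl fun u _ => ?_
        rw [SimpleGraph.dist_comm]
end

section
/- Let P and U be disjoint distributions on a graph G with U a unit. Every cooperation vertex c of (P,U) has a neighbor with positive cooperation excess, i.e., a neighbor n with exc(P+U,n) > exc(P,n) + exc(U,n). -/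
/-!
A vertex `c` without pebbles can only receive its first pebble by a move from a neighbor
holding two. Since `c` is reachable under `P + U` but empty, some neighbor `n` of `c` is
2-reachable under `P + U`, so `exc G (P + U) n ≥ 1`. Under `P` alone (or `U` alone) no
neighbor of `c` is 2-reachable, since otherwise one more move would reach `c`; hence
`exc G P n = exc G U n = 0`.
-/

open Finset

section Pebbling

variable {V : Type*} [DecidableEq V] {G : SimpleGraph V}

lemma Executable.append {p : V → ℕ} {σ τ : List (PMove V)} (hσ : Executable G p σ)
    (hτ : Executable G (applySeq p σ) τ) : Executable G p (σ ++ τ) := by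
  induction σ generalizing p with
  | nil => exact hτ
  | cons m ms ih => exact ⟨hσ.1, hσ.2.1, ih hσ.2.2 hτ⟩

lemma eq_zero_of_not_reachable' {p : V → ℕ} {v : V} (h : ¬ Reachable' G p v) : p v = 0 := by
  by_contra hv
  exact h ⟨[], trivial, Nat.one_le_iff_ne_zero.mpr hv⟩

lemma KReachable.reachable'_of_adj {p : V → ℕ} {n c : V} (hn : KReachable G p 2 n)
    (hadj : G.Adj n c) : Reachable' G p c := by
  obtain ⟨σ, hσ, h2⟩ := hn
  refine ⟨σ ++ [⟨n, c⟩], hσ.append ⟨hadj, h2, trivial⟩, ?_⟩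
  simp [applySeq, applyMove, (G.ne_of_adj hadj).symm]

lemma exists_adj_kReachable_two {p : V → ℕ} {c : V} (hpc : p c = 0)
    (hc : Reachable' G p c) : ∃ n, G.Adj n c ∧ KReachable G p 2 n := by
  obtain ⟨σ, hσ, h1⟩ := hc
  induction σ generalizing p with
  | nil => simp [applySeq, hpc] at h1
  | cons m ms ih =>
    obtain ⟨hadj, h2, hms⟩ := hσ
    by_cases htgt : m.tgt = c
    · exact ⟨m.src, htgt ▸ hadj, [], trivial, h2⟩
    · have hpc' : applyMove p m c = 0 := by
        simp only [applyMove]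
        split_ifs with hsrc hc
        · omega
        · exact absurd hc.symm htgt
        · exact hpc
      obtain ⟨n, hadj', τ, hτ, hk⟩ := ih hpc' hms h1
      exact ⟨n, hadj', m :: τ, ⟨hadj, h2, hτ⟩, hk⟩

lemma exc_eq_zero_of_adj_not_reachable' {p : V → ℕ} {n c : V} (hc : ¬ Reachable' G p c)
    (hadj : G.Adj n c) : exc G p n = 0 := by
  have : reach G p n ≤ 1 :=
    csSup_le ⟨0, [], trivial, Nat.zero_le _⟩ fun k ⟨σ, hσ, hk⟩ => by
      by_contra! hlt
      exact hc (KReachable.reachable'_of_adj ⟨σ, hσ, hlt.trans_le hk⟩ hadj)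
  exact Nat.sub_eq_zero_of_le this

end Pebbling

section Finite

variable {V : Type*} [Fintype V] [DecidableEq V] {G : SimpleGraph V}

lemma sum_applyMove_lt {p : V → ℕ} {m : PMove V} (h2 : 2 ≤ p m.src) :
    ∑ w, applyMove p m w < ∑ w, p w := by
  have hpoint : ∀ w, applyMove p m w + (if w = m.src then 2 else 0)
      ≤ p w + (if w = m.tgt then 1 else 0) := by
    intro w
    simp only [applyMove]
    split_ifs <;> subst_vars <;> omega
  have := Finset.sum_le_sum fun w (_ : w ∈ univ) => hpoint w
  simp only [Finset.sum_add_distrib, Finset.sum_ite_eq', Finset.mem_univ, if_true] at this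
  omega

lemma sum_applySeq_le {p : V → ℕ} {σ : List (PMove V)} (h : Executable G p σ) :
    ∑ w, applySeq p σ w ≤ ∑ w, p w := by
  induction σ generalizing p with
  | nil => rfl
  | cons m ms ih => exact (ih h.2.2).trans (sum_applyMove_lt h.2.1).le

-- Without this bound `reach` would be the junk value `sSup` of an unbounded set.
lemma bddAbove_kReachable (p : V → ℕ) (v : V) : BddAbove {k | KReachable G p k v} :=
  ⟨∑ w, p w, fun _ ⟨_, hσ, hk⟩ =>
    hk.trans ((Finset.single_le_sum (fun w _ => Nat.zero_le (applySeq p _ w))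
      (Finset.mem_univ v)).trans (sum_applySeq_le hσ))⟩

lemma KReachable.le_reach {p : V → ℕ} {k : ℕ} {v : V} (h : KReachable G p k v) :
    k ≤ reach G p v :=
  le_csSup (bddAbove_kReachable p v) h

end Finite

theorem stmt4_general {V : Type*} [Fintype V] [DecidableEq V] (G : SimpleGraph V)
    (P : V → ℕ) (U : V → ℕ) (c : V)
    (hc : Reachable' G (P + U) c ∧ ¬ Reachable' G P c ∧ ¬ Reachable' G U c) :
    ∃ n, G.Adj c n ∧ exc G P n + exc G U n < exc G (P + U) n := by
  obtain ⟨hPU, hP, hU⟩ := hc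
  have hc0 : (P + U) c = 0 := by
    simp [eq_zero_of_not_reachable' hP, eq_zero_of_not_reachable' hU]
  obtain ⟨n, hadj, hn⟩ := exists_adj_kReachable_two hc0 hPU
  refine ⟨n, hadj.symm, ?_⟩
  rw [exc_eq_zero_of_adj_not_reachable' hP hadj, exc_eq_zero_of_adj_not_reachable' hU hadj]
  have h2 : 2 ≤ reach G (P + U) n := hn.le_reach
  unfold exc
  omega

/-- Every cooperation vertex of `(P, U)` (with `U` a unit at `u`, `P u = 0`)
has a neighbor with positive cooperation excess. -/
theorem stmt4 {V : Type*} [Fintype V] [DecidableEq V] (G : SimpleGraph V)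
    (P : V → ℕ) (u : V) (b : ℕ) (hb : 1 ≤ b)
    (U : V → ℕ) (hU : U = fun w => if w = u then b else 0) (hPu : P u = 0)
    (c : V) (hc : Reachable' G (P + U) c ∧ ¬ Reachable' G P c ∧ ¬ Reachable' G U c) :
    ∃ n, G.Adj c n ∧ exc G P n + exc G U n < exc G (P + U) n :=
  stmt4_general G P U c hc
end

section
/- Let G be a graph with maximum degree 1 (a matching plus isolated vertices), P a distribution, and U a unit with |U| ≥ 2 pebbles on vertex u with P(u)=0. Then coop(P,U) = 0 and CE(P,U) ≤ DC(P,U), where CE(P,U) = TE(P+U) − TE(P) − TE(U). -/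
open Finset

section Aux

variable {V : Type*} [Fintype V] [DecidableEq V] (G : SimpleGraph V) [DecidableRel G.Adj]

/-- The weight of `v`: its own pebbles plus half the pebbles on its (unique) neighbor. -/
def Wt (p : V → ℕ) (v : V) : ℕ :=
  p v + (∑ w ∈ G.neighborFinset v, p w) / 2

lemma nf_cases (hdeg : ∀ v, G.degree v ≤ 1) (v : V) :
    G.neighborFinset v = ∅ ∨ ∃ w, G.neighborFinset v = {w} ∧ G.Adj v w := by
  have h := hdeg v
  rw [← SimpleGraph.card_neighborFinset_eq_degree] at h
  interval_cases h' : (G.neighborFinset v).card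
  · left; exact Finset.card_eq_zero.mp h'
  · right
    obtain ⟨w, hw⟩ := Finset.card_eq_one.mp h'
    exact ⟨w, hw, (SimpleGraph.mem_neighborFinset G v w).mp (hw ▸ Finset.mem_singleton_self w)⟩

lemma wt_step (hdeg : ∀ v, G.degree v ≤ 1) (p : V → ℕ) (m : PMove V)
    (hadj : G.Adj m.src m.tgt) (h2 : 2 ≤ p m.src) (v : V) :
    Wt G (applyMove p m) v ≤ Wt G p v := by
  have hst : m.src ≠ m.tgt := hadj.ne
  rcases nf_cases G hdeg v with h | ⟨w, hw, hvw⟩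
  · have hs : v ≠ m.src := by
      intro he
      have : m.tgt ∈ G.neighborFinset v := by
        rw [SimpleGraph.mem_neighborFinset, he]; exact hadj
      simp [h] at this
    have ht : v ≠ m.tgt := by
      intro he
      have : m.src ∈ G.neighborFinset v := by
        rw [SimpleGraph.mem_neighborFinset, he]; exact hadj.symm
      simp [h] at this
    simp [Wt, h, applyMove, hs, ht]
  · have hwv : w ≠ v := hvw.ne'
    -- neighbor finset of w is {v}
    have hwv' : G.neighborFinset w = {v} := by
      rcases nf_cases G hdeg w with h' | ⟨x, hx, hwx⟩
      · exfalso
        have : v ∈ G.neighborFinset w := (SimpleGraph.mem_neighborFinset G w v).mpr hvw.symm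
        simp [h'] at this
      · have : v ∈ G.neighborFinset w := (SimpleGraph.mem_neighborFinset G w v).mpr hvw.symm
        rw [hx] at this
        simp at this
        rw [hx, this]
    have key : (m.src = v ∧ m.tgt = w) ∨ (m.src = w ∧ m.tgt = v) ∨
        (m.src ≠ v ∧ m.src ≠ w ∧ m.tgt ≠ v ∧ m.tgt ≠ w) := by
      by_cases h1 : m.src = v
      · left
        refine ⟨h1, ?_⟩
        have : m.tgt ∈ G.neighborFinset v := by
          rw [SimpleGraph.mem_neighborFinset]; exact h1 ▸ hadj
        simpa [hw] using this
      · by_cases h2' : m.src = w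
        · right; left
          refine ⟨h2', ?_⟩
          have : m.tgt ∈ G.neighborFinset w := by
            rw [SimpleGraph.mem_neighborFinset]; exact h2' ▸ hadj
          simpa [hwv'] using this
        · right; right
          refine ⟨h1, h2', ?_, ?_⟩
          · intro h3
            have : m.src ∈ G.neighborFinset v := by
              rw [SimpleGraph.mem_neighborFinset]; exact h3 ▸ hadj.symm
            rw [hw] at this; simp at this; exact h2' this
          · intro h3
            have : m.src ∈ G.neighborFinset w := by
              rw [SimpleGraph.mem_neighborFinset]; exact h3 ▸ hadj.symm
            rw [hwv'] at this; simp at this; exact h1 this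
    rcases key with ⟨h1, h2''⟩ | ⟨h1, h2''⟩ | ⟨h1, h2'', h3, h4⟩
    · have hqv : applyMove p m v = p v - 2 := by simp [applyMove, h1]
      have hqw : applyMove p m w = p w + 1 := by simp [applyMove, h1, h2'', hwv]
      have hpv : 2 ≤ p v := h1 ▸ h2
      simp only [Wt, hw, Finset.sum_singleton, hqv, hqw]
      omega
    · have hqv : applyMove p m v = p v + 1 := by
        simp [applyMove, h1, h2'', Ne.symm hwv]
      have hqw : applyMove p m w = p w - 2 := by simp [applyMove, h1]
      have hpw : 2 ≤ p w := h1 ▸ h2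
      simp only [Wt, hw, Finset.sum_singleton, hqv, hqw]
      omega
    · have hqv : applyMove p m v = p v := by
        simp [applyMove, Ne.symm h1, Ne.symm h3]
      have hqw : applyMove p m w = p w := by
        simp [applyMove, Ne.symm h2'', Ne.symm h4]
      simp only [Wt, hw, Finset.sum_singleton, hqv, hqw]
      omega

lemma seq_le (hdeg : ∀ v, G.degree v ≤ 1) :
    ∀ (σ : List (PMove V)) (p : V → ℕ), Executable G p σ →
      ∀ v, applySeq p σ v ≤ Wt G p v := by
  intro σ
  induction σ with
  | nil => intro p _ v; simp [applySeq, Wt]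
  | cons m ms ih =>
    intro p hex v
    obtain ⟨hadj, h2, hex'⟩ := hex
    calc applySeq p (m :: ms) v = applySeq (applyMove p m) ms v := rfl
      _ ≤ Wt G (applyMove p m) v := ih (applyMove p m) hex' v
      _ ≤ Wt G p v := wt_step G hdeg p m hadj h2 v

lemma replicate_exec {w v : V} (hadj : G.Adj w v) :
    ∀ (k : ℕ) (p : V → ℕ), 2 * k ≤ p w →
      Executable G p (List.replicate k ⟨w, v⟩) ∧
        applySeq p (List.replicate k ⟨w, v⟩) v = p v + k := by
  have hwv : w ≠ v := hadj.ne
  intro k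
  induction k with
  | zero => intro p _; exact ⟨trivial, by simp [applySeq]⟩
  | succ n ih =>
    intro p hp
    have hq : applyMove p ⟨w, v⟩ w = p w - 2 := by simp [applyMove]
    have hqv : applyMove p ⟨w, v⟩ v = p v + 1 := by simp [applyMove, hwv.symm]
    obtain ⟨he, hv⟩ := ih (applyMove p ⟨w, v⟩) (by rw [hq]; omega)
    rw [List.replicate_succ]
    refine ⟨⟨hadj, by show (2:ℕ) ≤ p w; omega, he⟩, ?_⟩
    have : applySeq p (⟨w, v⟩ :: List.replicate n ⟨w, v⟩) v
        = applySeq (applyMove p ⟨w, v⟩) (List.replicate n ⟨w, v⟩) v := rfl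
    rw [this, hv, hqv]
    omega

lemma achieve (hdeg : ∀ v, G.degree v ≤ 1) (p : V → ℕ) (v : V) :
    KReachable G p (Wt G p v) v := by
  rcases nf_cases G hdeg v with h | ⟨w, hw, hvw⟩
  · exact ⟨[], trivial, by simp [applySeq, Wt, h]⟩
  · obtain ⟨he, hv⟩ := replicate_exec G hvw.symm (p w / 2) p (by omega)
    exact ⟨_, he, by rw [hv]; simp [Wt, hw]⟩

lemma reach_eq (hdeg : ∀ v, G.degree v ≤ 1) (p : V → ℕ) (v : V) :
    reach G p v = Wt G p v := by
  have hne : {k | KReachable G p k v}.Nonempty :=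
    ⟨0, [], trivial, Nat.zero_le _⟩
  apply le_antisymm
  · apply csSup_le hne
    rintro k ⟨σ, hex, hk⟩
    exact hk.trans (seq_le G hdeg σ p hex v)
  · apply le_csSup
    · refine ⟨Wt G p v, ?_⟩
      rintro k ⟨σ, hex, hk⟩
      exact hk.trans (seq_le G hdeg σ p hex v)
    · exact achieve G hdeg p v

lemma reachable_iff (hdeg : ∀ v, G.degree v ≤ 1) (p : V → ℕ) (v : V) :
    Reachable' G p v ↔ 1 ≤ Wt G p v := by
  constructor
  · rintro ⟨σ, hex, hk⟩
    exact hk.trans (seq_le G hdeg σ p hex v)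
  · intro h1
    obtain ⟨σ, hex, hk⟩ := achieve G hdeg p v
    exact ⟨σ, hex, le_trans h1 hk⟩

end Aux

/-- On a graph with maximum degree at most 1, for `U` a unit with at least
two pebbles at `u` and `P u = 0`, `coop(P,U) = 0` and `CE(P,U) ≤ DC(P,U)`. -/
theorem stmt8 {V : Type*} [Fintype V] [DecidableEq V] (G : SimpleGraph V)
    [DecidableRel G.Adj] (hdeg : ∀ v, G.degree v ≤ 1)
    (P : V → ℕ) (u : V) (b : ℕ) (hb : 2 ≤ b)
    (U : V → ℕ) (hU : U = fun w => if w = u then b else 0) (hPu : P u = 0) :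
    coop G P U = 0 ∧ CE G P U ≤ (DC G P U : ℤ) := by
  subst hU
  set U : V → ℕ := fun w => if w = u then b else 0 with hU
  -- key: Wt splits additively in this setting
  have hsplit : ∀ v, Wt G (P + U) v = Wt G P v + Wt G U v := by
    intro v
    have hzero : (∑ w ∈ G.neighborFinset v, P w) = 0 ∨
        (∑ w ∈ G.neighborFinset v, U w) = 0 := by
      by_cases hadj : G.Adj v u
      · left
        rcases nf_cases G hdeg v with h | ⟨w, hw, hvw⟩
        · simp [h]
        · have : u ∈ G.neighborFinset v := (SimpleGraph.mem_neighborFinset G v u).mpr hadj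
          rw [hw] at this
          simp at this
          rw [hw, ← this]
          simp [hPu]
      · right
        apply Finset.sum_eq_zero
        intro w hwmem
        have : G.Adj v w := (SimpleGraph.mem_neighborFinset G v w).mp hwmem
        have hne : w ≠ u := by rintro rfl; exact hadj this
        simp [hU, hne]
    simp only [Wt, Pi.add_apply]
    rw [Finset.sum_add_distrib]
    rcases hzero with h0 | h0 <;> omega
  have hriff := reachable_iff G hdeg
  constructor
  · -- coop = 0
    have : {v | Reachable' G (P + U) v ∧ ¬ Reachable' G P v ∧ ¬ Reachable' G U v} = ∅ := by
      rw [Set.eq_empty_iff_forall_notMem]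
      rintro v ⟨h1, h2, h3⟩
      rw [hriff] at h1 h2 h3
      rw [hsplit v] at h1
      omega
    rw [coop, this, Set.ncard_empty]
  · -- CE ≤ DC
    classical
    have hDC : (DC G P U : ℤ)
        = ∑ v, (if Reachable' G P v ∧ Reachable' G U v then (1 : ℤ) else 0) := by
      rw [Finset.sum_boole]
      norm_cast
      rw [DC, Set.ncard_eq_toFinset_card']
      congr 1
      ext v
      simp
    rw [hDC, CE]
    simp only [TE, exc, reach_eq G hdeg]
    push_cast
    rw [← Finset.sum_sub_distrib, ← Finset.sum_sub_distrib]
    apply Finset.sum_le_sum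
    intro v _
    rw [hsplit v]
    by_cases h : Reachable' G P v ∧ Reachable' G U v
    · rw [if_pos h]
      obtain ⟨h1, h2⟩ := h
      rw [hriff] at h1 h2
      omega
    · rw [if_neg h]
      rw [not_and_or, hriff, hriff] at h
      omega
end

section
/- Consider a graph with maximum degree Δ and a vertex subset forming a block in which inner vertices (a designated nonempty set) induce a connected structure where every boundary vertex is adjacent to an inner vertex: if b is the number of boundary vertices and i ≥ 1 the number of inner vertices, then b ≤ (Δ−2)·i + 2. -/
open Finset

/-!
Count the edge-ends at the vertices of `I`: every boundary vertex receives at least one end of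
an edge leaving `I`, and every edge of `G[I]` contributes two ends. Hence
`b + 2 e(G[I]) ≤ ∑_{w ∈ I} deg w ≤ Δ i`, and connectivity of `G[I]` gives `e(G[I]) ≥ i - 1`.
-/

namespace SimpleGraph

variable {V : Type*} [Fintype V] [DecidableEq V] (G : SimpleGraph V) [DecidableRel G.Adj]
  (s : Set V) [DecidablePred (· ∈ s)]

theorem ncard_boundary_le_sum_card_neighborFinset_sdiff :
    {v | v ∉ s ∧ ∃ w ∈ s, G.Adj v w}.ncard ≤
      ∑ w ∈ s.toFinset, #(G.neighborFinset w \ s.toFinset) := by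
  rw [Set.ncard_eq_toFinset_card']
  refine (card_le_card ?_).trans card_biUnion_le
  rintro v hv
  obtain ⟨hvs, w, hws, hvw⟩ := by simpa using hv
  simpa using ⟨w, hws, hvw.symm, hvs⟩

theorem sum_card_neighborFinset_inter_eq_two_mul_card_edgeFinset_induce :
    ∑ w ∈ s.toFinset, #(G.neighborFinset w ∩ s.toFinset) = 2 * #(G.induce s).edgeFinset := by
  rw [← sum_degrees_eq_twice_card_edges, sum_subtype s.toFinset (p := (· ∈ s)) (by simp)]
  refine sum_congr rfl fun v _ => ?_
  rw [← card_neighborFinset_eq_degree, ← map_neighborFinset_induce, card_map]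

theorem ncard_boundary_add_two_mul_card_edgeFinset_induce_le :
    {v | v ∉ s ∧ ∃ w ∈ s, G.Adj v w}.ncard + 2 * #(G.induce s).edgeFinset ≤
      ∑ w ∈ s.toFinset, G.degree w := by
  rw [← sum_card_neighborFinset_inter_eq_two_mul_card_edgeFinset_induce, ← sum_congr rfl
    fun w _ => G.card_neighborFinset_eq_degree w, ← sum_congr rfl fun w _ =>
    card_sdiff_add_card_inter (G.neighborFinset w) s.toFinset, sum_add_distrib]
  exact Nat.add_le_add_right (G.ncard_boundary_le_sum_card_neighborFinset_sdiff s) _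

end SimpleGraph

theorem stmt11_general {V : Type*} [Fintype V] (G : SimpleGraph V)
    [DecidableRel G.Adj] (hΔ : 2 ≤ G.maxDegree)
    (I : Set V) (hconn : (G.induce I).Connected) :
    Set.ncard {v | v ∉ I ∧ ∃ w ∈ I, G.Adj v w} ≤ (G.maxDegree - 2) * I.ncard + 2 := by
  classical
  have hedges : I.ncard ≤ #(G.induce I).edgeFinset + 1 := by
    have := hconn.card_vert_le_card_edgeSet_add_one
    rwa [Nat.card_coe_set_eq, Nat.card_eq_fintype_card, SimpleGraph.card_edgeSet] at this
  have hdegrees : ∑ w ∈ I.toFinset, G.degree w ≤ G.maxDegree * I.ncard := by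
    rw [Set.ncard_eq_toFinset_card', mul_comm, ← smul_eq_mul]
    exact sum_le_card_nsmul _ _ _ fun w _ => G.degree_le_maxDegree w
  have hsplit : G.maxDegree * I.ncard = (G.maxDegree - 2) * I.ncard + 2 * I.ncard := by
    rw [← Nat.add_mul, Nat.sub_add_cancel hΔ]
  have hcount := G.ncard_boundary_add_two_mul_card_edgeFinset_induce_le I
  omega

/-- If the inner vertex set `I` induces a connected subgraph and the
boundary is the set of outside vertices adjacent to `I`, then `b ≤ (Δ−2)·i + 2`. -/
theorem stmt11 {V : Type*} [Fintype V] [DecidableEq V] (G : SimpleGraph V)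
    [DecidableRel G.Adj] (hΔ : 2 ≤ G.maxDegree)
    (I : Set V) (hne : I.Nonempty) (hconn : (G.induce I).Connected) :
    Set.ncard {v | v ∉ I ∧ ∃ w ∈ I, G.Adj v w} ≤ (G.maxDegree - 2) * I.ncard + 2 :=
  stmt11_general G hΔ I hconn
end
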